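/- (Deterministic tail bound for 𝒩 given small restricted free energies.) Let λ > 0, ε > 0, N even and m̄ ∈ {0, 2, …, N}. There is an absolute constant c_3 > 0 (from the random walk estimate P(S_n > 0 for n = 1,…,N−1, S_N = 0) ≥ 1/(c_3 N^{3/2})) and a constant c_4 depending only on λε such that: for any ω ∈ ℝ^N with the property that F^c_{N,ω}(λ,h;m) < −λ ε m / N for every m ≥ m̄, one has P^c_{N,ω}( 𝒩 ≥ m̄ ) ≤ c_4 N^{3/2} exp(−λ ε m̄). -/

import Mathlib

open MeasureTheory ProbabilityTheory Filter Finset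

noncomputable section

/-- Indicator of a proposition. -/
def ind (p : Prop) : ℝ :=
  letI := Classical.propDecidable p
  if p then 1 else 0

/-- Extend a finite sequence of steps (`true` = step up) to an infinite one. -/
def extendPath (N : ℕ) (ε : Fin N → Bool) : ℕ → Bool :=
  fun j => if h : j < N then ε ⟨j, h⟩ else false

/-- Position `S_n` of the simple random walk with steps `ε`. -/
def walkPos (ε : ℕ → Bool) (n : ℕ) : ℤ :=
  ∑ j ∈ Finset.range n, (if ε j then (1 : ℤ) else -1)

/-- Sign of `S_n`, with the convention `sign S_{2n} = sign S_{2n-1}` whenever `S_{2n} = 0`. -/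
def sgn (ε : ℕ → Bool) (n : ℕ) : ℤ :=
  if 0 < walkPos ε n then 1
  else if walkPos ε n < 0 then -1
  else if 0 < walkPos ε (n - 1) then 1 else -1

/-- The set of times `1 ≤ n ≤ N` spent in the lower half plane (`Δ_n = 1`). -/
def lowSet (ε : ℕ → Bool) (N : ℕ) : Finset ℕ :=
  (Finset.Icc 1 N).filter (fun n => sgn ε n = -1)

/-- `𝒩 = Σ_{n=1}^N Δ_n`, the number of monomers in the lower half plane. -/
def NVis (ε : ℕ → Bool) (N : ℕ) : ℕ := (lowSet ε N).card

/-- `max 𝒜`, the last exit point from the lower half plane (`𝒜 = lowSet ∪ {0}`). -/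
def maxA (ε : ℕ → Bool) (N : ℕ) : ℕ := (lowSet ε N).sup id

/-- Expectation, under the simple random walk law, of a function of the first `N` steps. -/
def pathE (N : ℕ) (f : (ℕ → Bool) → ℝ) : ℝ :=
  (1 / 2 : ℝ) ^ N * ∑ ε : Fin N → Bool, f (extendPath N ε)

/-- Boltzmann weight `exp(-2λ Σ_{n=1}^N (ω_n + h) Δ_n)`. -/
def weight (lam h : ℝ) (ω : ℕ → ℝ) (N : ℕ) (ε : ℕ → Bool) : ℝ :=
  Real.exp (-(2 * lam) * ∑ n ∈ lowSet ε N, (ω n + h))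

/-- Restricted partition function `Z_{N,ω}(A)`. -/
def Zev (lam h : ℝ) (N : ℕ) (ω : ℕ → ℝ) (A : (ℕ → Bool) → Prop) : ℝ :=
  pathE N (fun ε => weight lam h ω N ε * ind (A ε))

/-- Endpoint constraint: `a = true` is the constrained case `S_N = 0`, `a = false` the free one. -/
def endOK (a : Bool) (N : ℕ) (ε : ℕ → Bool) : Prop := a = true → walkPos ε N = 0

/-- Partition function `Z^a_{N,ω}` (`a = false`: free, `a = true`: constrained). -/
def Zpart (a : Bool) (lam h : ℝ) (N : ℕ) (ω : ℕ → ℝ) : ℝ :=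
  Zev lam h N ω (endOK a N)

/-- Partition function `Z̃^a_{N,ω}` with the `sign` form of the Hamiltonian. -/
def Ztilde (a : Bool) (lam h : ℝ) (N : ℕ) (ω : ℕ → ℝ) : ℝ :=
  pathE N (fun ε =>
    Real.exp (lam * ∑ n ∈ Finset.Icc 1 N, (ω n + h) * (sgn ε n : ℝ)) * ind (endOK a N ε))

/-- Polymer measure of the event `A`: `P^a_{N,ω}(A)`. -/
def polyProb (a : Bool) (lam h : ℝ) (N : ℕ) (ω : ℕ → ℝ) (A : (ℕ → Bool) → Prop) : ℝ :=
  Zev lam h N ω (fun ε => A ε ∧ endOK a N ε) / Zpart a lam h N ω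

/-- Basic assumptions: `P` is the law of an IID sequence with marginal `μ`,
`μ` symmetric, of unit variance and with finite exponential moments near `0`. -/
def BasicSetup (mu : Measure ℝ) (P : Measure (ℕ → ℝ)) : Prop :=
  IsProbabilityMeasure mu ∧ IsProbabilityMeasure P ∧
    mu.map (fun x => -x) = mu ∧
    (∫ x, x ^ 2 ∂mu) = 1 ∧
    (∃ t₀ > (0 : ℝ), ∀ t : ℝ, |t| ≤ t₀ → Integrable (fun x => Real.exp (t * x)) mu) ∧
    (∀ n : ℕ, P.map (fun ω => ω n) = mu) ∧
    iIndepFun (fun n (ω : ℕ → ℝ) => ω n) P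

/-- Deviation inequality above the mean, with constant `C`, for convex Lipschitz functions
(Lipschitz with respect to the Euclidean distance) of `ω_1, …, ω_N`. -/
def DevIneq (P : Measure (ℕ → ℝ)) (C : ℝ) : Prop :=
  0 < C ∧
    ∀ (N : ℕ) (g : (Fin N → ℝ) → ℝ) (K : ℝ), 0 ≤ K →
      ConvexOn ℝ Set.univ g →
      (∀ x y : Fin N → ℝ, |g x - g y| ≤ K * Real.sqrt (∑ i, (x i - y i) ^ 2)) →
      Integrable (fun ω => g (fun i => ω (i + 1))) P →
      ∀ t : ℝ, 0 ≤ t →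
        (P {ω | (∫ ω', g (fun i => ω' (i + 1)) ∂P) + t ≤ g (fun i => ω (i + 1))}).toReal
          ≤ C * Real.exp (-t ^ 2 / (C * K ^ 2))

end

open MeasureTheory ProbabilityTheory Filter Finset

/-!
On a positive excursion `S_1, …, S_{N-1} > 0`, `S_N = 0` the walk never visits the lower half
plane, so the Boltzmann weight is `1` and `Z^c_{N,ω}` is at least the probability of such an
excursion. Excursions of length `2k` are the nested Dyck words `U w D`, so there are
`catalan (k - 1)` of them, and `16^n ≤ (4n + 1) C(2n, n)²` turns this into
`Z^c_{N,ω} ≥ 1 / (4 N^{3/2})`. By the sign convention at zeros, `Δ_{2j+1} = Δ_{2j+2}`, so `𝒩` is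
even and `Z^c_{N,ω}(𝒩 ≥ m̄)` is the sum over even `m ≥ m̄` of the restricted partition
functions, each at most `exp(-λεm)` by hypothesis; a geometric series bounds the sum by
`exp(-λεm̄) / (1 - exp(-2λε))`.
-/

theorem Nat.sixteen_pow_le_centralBinom_sq (n : ℕ) :
    16 ^ n ≤ (4 * n + 1) * n.centralBinom ^ 2 := by
  induction n with
  | zero => simp
  | succ n ih =>
    have hrec := Nat.succ_mul_centralBinom_succ n
    have hpoly : 16 * (n + 1) ^ 2 * (4 * n + 1) ≤ 4 * (4 * n + 5) * (2 * n + 1) ^ 2 := by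
      ring_nf; omega
    refine le_of_mul_le_mul_left ?_ (show 0 < (n + 1) ^ 2 by positivity)
    calc (n + 1) ^ 2 * 16 ^ (n + 1) = 16 * (n + 1) ^ 2 * 16 ^ n := by ring
      _ ≤ 16 * (n + 1) ^ 2 * ((4 * n + 1) * n.centralBinom ^ 2) := by gcongr
      _ = 16 * (n + 1) ^ 2 * (4 * n + 1) * n.centralBinom ^ 2 := by ring
      _ ≤ 4 * (4 * n + 5) * (2 * n + 1) ^ 2 * n.centralBinom ^ 2 := by gcongr
      _ = (n + 1) ^ 2 * ((4 * (n + 1) + 1) * (n + 1).centralBinom ^ 2) := by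
        rw [show (n + 1) ^ 2 * ((4 * (n + 1) + 1) * (n + 1).centralBinom ^ 2)
          = (4 * n + 5) * ((n + 1) * (n + 1).centralBinom) ^ 2 by ring, hrec]
        ring

theorem sixteen_pow_succ_le_catalan_sq (n : ℕ) :
    16 ^ (n + 1) ≤ 64 * (n + 1) ^ 3 * catalan n ^ 2 := by
  have hcb := Nat.sixteen_pow_le_centralBinom_sq n
  rw [← succ_mul_catalan_eq_centralBinom] at hcb
  calc 16 ^ (n + 1) = 16 * 16 ^ n := by ring
    _ ≤ 16 * ((4 * n + 1) * ((n + 1) * catalan n) ^ 2) := by gcongr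
    _ = 16 * (4 * n + 1) * (n + 1) ^ 2 * catalan n ^ 2 := by ring
    _ ≤ 16 * (4 * (n + 1)) * (n + 1) ^ 2 * catalan n ^ 2 := by gcongr; omega
    _ = 64 * (n + 1) ^ 3 * catalan n ^ 2 := by ring

theorem four_pow_le_catalan {k : ℕ} (hk : 1 ≤ k) :
    (4 : ℝ) ^ k ≤ 4 * ((2 * k : ℝ) * √(2 * k)) * catalan (k - 1) := by
  obtain ⟨n, rfl⟩ := Nat.exists_eq_add_of_le' hk
  have hcat : ((16 ^ (n + 1) : ℕ) : ℝ) ≤ ((64 * (n + 1) ^ 3 * catalan n ^ 2 : ℕ) : ℝ) := by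
    exact_mod_cast sixteen_pow_succ_le_catalan_sq n
  have hsqrt : √(2 * ((n : ℝ) + 1)) ^ 2 = 2 * (n + 1) := Real.sq_sqrt (by positivity)
  rw [← pow_le_pow_iff_left₀ (by positivity) (by positivity) two_ne_zero]
  push_cast at hcat ⊢
  calc ((4 : ℝ) ^ (n + 1)) ^ 2 = 16 ^ (n + 1) := by rw [← pow_mul, mul_comm, pow_mul]; norm_num
    _ ≤ 64 * (n + 1) ^ 3 * catalan n ^ 2 := hcat
    _ ≤ 128 * (n + 1) ^ 3 * catalan n ^ 2 := by gcongr; norm_num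
    _ = (4 * (2 * ((n : ℝ) + 1) * √(2 * ((n : ℝ) + 1))) * catalan n) ^ 2 := by
      rw [mul_pow, mul_pow, mul_pow, hsqrt]; ring

open DyckStep in
/-- Past the end of the list the walk keeps stepping down, as `extendPath` pads with `false`. -/
def stepsOfList (l : List DyckStep) : ℕ → Bool := fun j => l.getD j D = U

open DyckStep in
theorem walkPos_stepsOfList (l : List DyckStep) {n : ℕ} (hn : n ≤ l.length) :
    walkPos (stepsOfList l) n = ((l.take n).count U : ℤ) - (l.take n).count D := by
  induction l generalizing n with
  | nil => simp_all [walkPos]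
  | cons a l ih =>
    cases n with
    | zero => simp [walkPos]
    | succ n =>
      have hshift : walkPos (stepsOfList (a :: l)) (n + 1)
          = (if a = U then 1 else -1) + walkPos (stepsOfList l) n := by
        simp [walkPos, Finset.sum_range_succ', stepsOfList, add_comm]
      rw [hshift, ih (by simpa using hn)]
      cases a <;>
        simp only [↓reduceIte, reduceCtorEq, List.take_succ_cons, List.count_cons_self,
          List.count_cons_of_ne, ne_eq, not_false_eq_true, Nat.cast_add, Nat.cast_one] <;>
        ring

theorem extendPath_stepsOfList {l : List DyckStep} {N : ℕ} (hl : l.length = N) :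
    extendPath N (fun j => stepsOfList l j) = stepsOfList l := by
  funext j
  by_cases hj : j < N
  · simp [extendPath, hj]
  · simp [extendPath, hj, stepsOfList, List.getElem?_eq_none (by omega : l.length ≤ j)]

theorem eq_of_stepsOfList_eq {l l' : List DyckStep} (hl : l.length = l'.length)
    (h : ∀ j < l.length, stepsOfList l j = stepsOfList l' j) : l = l' := by
  refine List.ext_getElem hl fun j hj hj' => ?_
  have := h j hj
  simp only [stepsOfList, List.getD_eq_getElem _ _ hj, List.getD_eq_getElem _ _ hj'] at this
  cases hx : l[j] <;> cases hy : l'[j] <;> simp_all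

def IsPosExcursion (N : ℕ) (ε : ℕ → Bool) : Prop :=
  (∀ n, 1 ≤ n → n < N → 0 < walkPos ε n) ∧ walkPos ε N = 0

theorem isPosExcursion_stepsOfList_nest (p : DyckWord) :
    IsPosExcursion p.nest.toList.length (stepsOfList p.nest.toList) := by
  refine ⟨fun n hn hnN => ?_, ?_⟩
  · rw [walkPos_stepsOfList _ hnN.le, sub_pos]
    exact_mod_cast DyckWord.IsNested.nest.2 hn hnN
  · rw [walkPos_stepsOfList _ le_rfl, List.take_length, p.nest.count_U_eq_count_D, sub_self]

theorem length_nest_toList (p : DyckWord) : p.nest.toList.length = 2 * (p.semilength + 1) := by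
  rw [← DyckWord.two_mul_semilength_eq_length, DyckWord.semilength_nest]

theorem nest_injective : Function.Injective DyckWord.nest := fun p q h =>
  DyckWord.ext (by simpa [DyckWord.nest] using congrArg DyckWord.toList h)

theorem catalan_le_card_posExcursion (n : ℕ) :
    catalan n ≤ Nat.card {ε : Fin (2 * (n + 1)) → Bool //
      IsPosExcursion (2 * (n + 1)) (extendPath (2 * (n + 1)) ε)} := by
  rw [← DyckWord.card_dyckWord_semilength_eq_catalan, ← Nat.card_eq_fintype_card]
  have hlen (p : {p : DyckWord // p.semilength = n}) : p.1.nest.toList.length = 2 * (n + 1) := by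
    rw [length_nest_toList, p.2]
  refine Nat.card_le_card_of_injective
    (fun p => ⟨fun j => stepsOfList p.1.nest.toList j, ?_⟩) fun p q hpq => ?_
  · rw [extendPath_stepsOfList (hlen p), ← hlen p]
    exact isPosExcursion_stepsOfList_nest p.1
  · refine Subtype.ext (nest_injective (DyckWord.ext (eq_of_stepsOfList_eq ?_ fun j hj => ?_)))
    · rw [hlen, hlen]
    · exact congrFun (congrArg Subtype.val hpq) ⟨j, hlen p ▸ hj⟩

theorem pathE_ind (N : ℕ) (A : (ℕ → Bool) → Prop) :
    pathE N (fun ε => ind (A ε))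
      = (1 / 2 : ℝ) ^ N * Nat.card {ε : Fin N → Bool // A (extendPath N ε)} := by
  classical
  simp [pathE, ind, Finset.sum_boole, Nat.card_eq_fintype_card, Fintype.card_subtype]

theorem posExcursion_prob_ge {k : ℕ} (hk : 1 ≤ k) :
    1 / (4 * ((2 * k : ℝ) * √(2 * k)))
      ≤ pathE (2 * k) (fun ε => ind (IsPosExcursion (2 * k) ε)) := by
  have hcard : (catalan (k - 1) : ℝ)
      ≤ Nat.card {ε : Fin (2 * k) → Bool // IsPosExcursion (2 * k) (extendPath (2 * k) ε)} := by
    obtain ⟨n, rfl⟩ := Nat.exists_eq_add_of_le' hk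
    exact_mod_cast catalan_le_card_posExcursion n
  have hcat := four_pow_le_catalan hk
  rw [pathE_ind, pow_mul, show (1 / 2 : ℝ) ^ 2 = 1 / 4 by norm_num, one_div_pow]
  calc 1 / (4 * ((2 * k : ℝ) * √(2 * k))) ≤ catalan (k - 1) / 4 ^ k := by
        rw [div_le_div_iff₀ (by positivity) (by positivity)]; linarith
    _ ≤ 1 / 4 ^ k * Nat.card {ε : Fin (2 * k) → Bool //
          IsPosExcursion (2 * k) (extendPath (2 * k) ε)} := by
        rw [one_div_mul_eq_div]; gcongr

theorem walkPos_succ (ε : ℕ → Bool) (n : ℕ) :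
    walkPos ε (n + 1) = walkPos ε n + if ε n then 1 else -1 :=
  Finset.sum_range_succ _ _

theorem sgn_eq_one_of_pos {ε : ℕ → Bool} {n : ℕ} (h : 0 < walkPos ε n) : sgn ε n = 1 := by
  simp [sgn, h]

theorem even_walkPos_add_self (ε : ℕ → Bool) (n : ℕ) : Even (walkPos ε n + n) := by
  induction n with
  | zero => simp [walkPos]
  | succ n ih =>
    rw [walkPos_succ]
    obtain ⟨r, hr⟩ := ih
    split_ifs
    · exact ⟨r + 1, by push_cast; omega⟩
    · exact ⟨r, by push_cast; omega⟩

/-- Odd times are never zeros of the walk, so by the convention for `sgn` at zeros the sign is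
constant on each pair of times `2j + 1, 2j + 2`. -/
theorem sgn_two_mul_add_two (ε : ℕ → Bool) (j : ℕ) : sgn ε (2 * j + 2) = sgn ε (2 * j + 1) := by
  obtain ⟨r, hr⟩ := even_walkPos_add_self ε (2 * j + 1)
  have hstep : walkPos ε (2 * j + 2) = walkPos ε (2 * j + 1) + if ε (2 * j + 1) then 1 else -1 :=
    walkPos_succ ε (2 * j + 1)
  push_cast at hr
  simp only [sgn, show 2 * j + 2 - 1 = 2 * j + 1 from rfl]
  split_ifs at hstep ⊢ <;> omega

theorem even_NVis_two_mul (ε : ℕ → Bool) (k : ℕ) : Even (NVis ε (2 * k)) := by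
  induction k with
  | zero => simp [NVis, lowSet]
  | succ k ih =>
    rw [NVis, lowSet, Finset.card_filter] at ih ⊢
    rw [show 2 * (k + 1) = 2 * k + 1 + 1 by ring, Finset.sum_Icc_succ_top (by omega),
      Finset.sum_Icc_succ_top (by omega), sgn_two_mul_add_two, add_assoc]
    exact ih.add (by split_ifs <;> decide)

theorem NVis_le (ε : ℕ → Bool) (N : ℕ) : NVis ε N ≤ N :=
  (Finset.card_filter_le _ _).trans (by simp)

theorem lowSet_eq_empty_of_isPosExcursion {ε : ℕ → Bool} {N : ℕ} (hN : 1 < N)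
    (h : IsPosExcursion N ε) : lowSet ε N = ∅ := by
  refine Finset.filter_eq_empty_iff.mpr fun n hn => ?_
  rw [Finset.mem_Icc] at hn
  obtain hnN | rfl := hn.2.lt_or_eq
  · simp [sgn_eq_one_of_pos (h.1 n hn.1 hnN)]
  · simp [sgn, h.2, h.1 (n - 1) (by omega) (by omega)]

theorem pathE_mono {N : ℕ} {f g : (ℕ → Bool) → ℝ} (h : ∀ ε, f ε ≤ g ε) :
    pathE N f ≤ pathE N g :=
  mul_le_mul_of_nonneg_left (Finset.sum_le_sum fun ε _ => h _) (by positivity)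

theorem pathE_sum {ι : Type*} (N : ℕ) (s : Finset ι) (F : ι → (ℕ → Bool) → ℝ) :
    pathE N (fun ε => ∑ i ∈ s, F i ε) = ∑ i ∈ s, pathE N (F i) := by
  rw [pathE, Finset.sum_comm, Finset.mul_sum]
  rfl

theorem Zev_eq_sum_fiber {ι : Type*} (lam h : ℝ) (N : ℕ) (ω : ℕ → ℝ)
    {A : (ℕ → Bool) → Prop} {f : (ℕ → Bool) → ι} {s : Finset ι} (hs : ∀ ε, A ε → f ε ∈ s) :
    Zev lam h N ω A = ∑ i ∈ s, Zev lam h N ω (fun ε => A ε ∧ f ε = i) := by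
  classical
  simp only [Zev]
  rw [← pathE_sum]
  congr 1
  funext ε
  rw [← Finset.mul_sum]
  by_cases hA : A ε <;> simp [ind, hA, hs ε]

theorem Zpart_true_ge_posExcursion (lam h : ℝ) {N : ℕ} (hN : 1 < N) (ω : ℕ → ℝ) :
    pathE N (fun ε => ind (IsPosExcursion N ε)) ≤ Zpart true lam h N ω := by
  unfold Zpart Zev
  refine pathE_mono fun ε => ?_
  by_cases hε : IsPosExcursion N ε
  · simp [ind, hε, hε.2, endOK, weight, lowSet_eq_empty_of_isPosExcursion hN hε]
  · simp only [ind, hε, if_false]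
    exact mul_nonneg (Real.exp_nonneg _) (by split_ifs <;> norm_num)

theorem one_div_le_Zpart_true (lam h : ℝ) {k : ℕ} (hk : 1 ≤ k) (ω : ℕ → ℝ) :
    1 / (4 * ((2 * k : ℝ) * √(2 * k))) ≤ Zpart true lam h (2 * k) ω :=
  (posExcursion_prob_ge hk).trans (Zpart_true_ge_posExcursion lam h (by omega) ω)

theorem Zev_tail_eq_sum (lam h : ℝ) (k mbar : ℕ) (ω : ℕ → ℝ) :
    Zev lam h (2 * k) ω (fun ε => mbar ≤ NVis ε (2 * k) ∧ endOK true (2 * k) ε)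
      = ∑ m ∈ (Finset.Icc mbar (2 * k)).filter Even,
          Zev lam h (2 * k) ω (fun ε => NVis ε (2 * k) = m ∧ walkPos ε (2 * k) = 0) := by
  rw [Zev_eq_sum_fiber lam h (2 * k) ω (f := fun ε => NVis ε (2 * k))
    (s := (Finset.Icc mbar (2 * k)).filter Even)
    fun ε hε => by simp [hε.1, NVis_le, even_NVis_two_mul]]
  refine Finset.sum_congr rfl fun m hm => congrArg _ (funext fun ε => propext ?_)
  simp only [Finset.mem_filter, Finset.mem_Icc] at hm
  simp only [endOK, forall_const]
  constructor
  · exact fun ⟨⟨_, hS⟩, hN⟩ => ⟨hN, hS⟩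
  · exact fun ⟨hN, hS⟩ => ⟨⟨hN ▸ hm.1.1, hS⟩, hN⟩

theorem le_exp_of_log_div_lt {z a N : ℝ} (hN : 0 < N) (h : Real.log z / N < a / N) :
    z ≤ Real.exp a :=
  (Real.le_exp_log z).trans (Real.exp_le_exp.mpr ((div_lt_div_iff_of_pos_right hN).mp h).le)

theorem sum_pow_filter_even_le {x : ℝ} (hx0 : 0 ≤ x) (hx1 : x < 1) {mbar : ℕ}
    (hmbar : Even mbar) (M : ℕ) :
    ∑ m ∈ (Finset.Icc mbar M).filter Even, x ^ m ≤ x ^ mbar / (1 - x ^ 2) := by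
  have hsub : (Finset.Icc mbar M).filter Even
      ⊆ (Finset.range (M + 1)).image (fun j => mbar + 2 * j) := by
    intro m hm
    simp only [Finset.mem_filter, Finset.mem_Icc] at hm
    obtain ⟨⟨hlo, hhi⟩, ⟨a, rfl⟩⟩ := hm
    obtain ⟨b, rfl⟩ := hmbar
    exact Finset.mem_image.mpr ⟨a - b, Finset.mem_range.mpr (by omega), by omega⟩
  calc ∑ m ∈ (Finset.Icc mbar M).filter Even, x ^ m
      ≤ ∑ m ∈ (Finset.range (M + 1)).image (fun j => mbar + 2 * j), x ^ m :=
        Finset.sum_le_sum_of_subset_of_nonneg hsub fun _ _ _ => pow_nonneg hx0 _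
    _ = x ^ mbar * ∑ j ∈ Finset.Ico 0 (M + 1), (x ^ 2) ^ j := by
        rw [Finset.sum_image fun _ _ _ _ h => by omega, Finset.mul_sum, Finset.range_eq_Ico]
        simp only [pow_add, pow_mul]
    _ ≤ x ^ mbar * ((x ^ 2) ^ 0 / (1 - x ^ 2)) := by
        gcongr
        exact geom_sum_Ico_le_of_lt_one (by positivity) (by nlinarith)
    _ = x ^ mbar / (1 - x ^ 2) := by rw [pow_zero, mul_one_div]

theorem exp_neg_sq_lt_one {a : ℝ} (ha : 0 < a) : Real.exp (-a) ^ 2 < 1 :=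
  pow_lt_one₀ (Real.exp_nonneg _) (Real.exp_lt_one_iff.mpr (neg_lt_zero.mpr ha)) two_ne_zero

theorem Zev_tail_le {a : ℝ} (ha : 0 < a) (lam h : ℝ) {k mbar : ℕ} (ω : ℕ → ℝ)
    (hk : 1 ≤ k) (hmbar : Even mbar)
    (hF : ∀ m : ℕ, Even m → mbar ≤ m → m ≤ 2 * k →
      Real.log (Zev lam h (2 * k) ω
          (fun ε => NVis ε (2 * k) = m ∧ walkPos ε (2 * k) = 0)) / (2 * k)
        < -(a * m) / (2 * k)) :
    Zev lam h (2 * k) ω (fun ε => mbar ≤ NVis ε (2 * k) ∧ endOK true (2 * k) ε)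
      ≤ Real.exp (-(a * mbar)) / (1 - Real.exp (-a) ^ 2) := by
  have hexp (m : ℕ) : Real.exp (-(a * m)) = Real.exp (-a) ^ m := by
    rw [← Real.exp_nat_mul]; ring_nf
  rw [Zev_tail_eq_sum, hexp]
  refine le_trans (Finset.sum_le_sum fun m hm => ?_)
    (sum_pow_filter_even_le (Real.exp_nonneg _) (Real.exp_lt_one_iff.mpr (neg_lt_zero.mpr ha))
      hmbar _)
  simp only [Finset.mem_filter, Finset.mem_Icc] at hm
  rw [← hexp]
  exact le_exp_of_log_div_lt (by positivity) (hF m hm.2 hm.1.1 hm.1.2)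

theorem polyProb_tail_le {a : ℝ} (ha : 0 < a) (lam h : ℝ) {k mbar : ℕ} (ω : ℕ → ℝ)
    (hk : 1 ≤ k) (hmbar : Even mbar)
    (hF : ∀ m : ℕ, Even m → mbar ≤ m → m ≤ 2 * k →
      Real.log (Zev lam h (2 * k) ω
          (fun ε => NVis ε (2 * k) = m ∧ walkPos ε (2 * k) = 0)) / (2 * k)
        < -(a * m) / (2 * k)) :
    polyProb true lam h (2 * k) ω (fun ε => mbar ≤ NVis ε (2 * k))
      ≤ 4 / (1 - Real.exp (-a) ^ 2) * ((2 * k : ℝ) * √(2 * k)) * Real.exp (-(a * mbar)) := by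
  have hx := exp_neg_sq_lt_one ha
  calc polyProb true lam h (2 * k) ω (fun ε => mbar ≤ NVis ε (2 * k))
      ≤ Real.exp (-(a * mbar)) / (1 - Real.exp (-a) ^ 2)
          / (1 / (4 * ((2 * k : ℝ) * √(2 * k)))) :=
        div_le_div₀ (by positivity) (Zev_tail_le ha lam h ω hk hmbar hF) (by positivity)
          (one_div_le_Zpart_true lam h hk ω)
    _ = 4 / (1 - Real.exp (-a) ^ 2) * ((2 * k : ℝ) * √(2 * k)) * Real.exp (-(a * mbar)) := by
        field_simp

/-- Deterministic tail bound for `𝒩` given small restricted free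
energies. There is an absolute `c₃ > 0` with
`P(S_n > 0, n = 1,…,N-1, S_N = 0) ≥ 1/(c₃ N^{3/2})`, and a constant `c₄ > 0` depending
only on `λε` such that: if `F^c_{N,ω}(λ,h;m) < -λεm/N` for all (even) `m ≥ m̄`, then
`P^c_{N,ω}(𝒩 ≥ m̄) ≤ c₄ N^{3/2} exp(-λεm̄)`. -/
theorem deterministic_visits_tail
    (lam eps : ℝ) (hlam : 0 < lam) (heps : 0 < eps) :
    (∃ c₃ > (0 : ℝ), ∀ k : ℕ, 1 ≤ k →
      1 / (c₃ * ((2 * k : ℝ) * Real.sqrt (2 * k)))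
        ≤ pathE (2 * k) (fun ε =>
            ind ((∀ n, 1 ≤ n → n < 2 * k → 0 < walkPos ε n) ∧ walkPos ε (2 * k) = 0))) ∧
    ∃ c₄ > (0 : ℝ), ∀ (h : ℝ) (k mbar : ℕ) (ω : ℕ → ℝ), 1 ≤ k → Even mbar → mbar ≤ 2 * k →
      (∀ m : ℕ, Even m → mbar ≤ m → m ≤ 2 * k →
        Real.log (Zev lam h (2 * k) ω
            (fun ε => NVis ε (2 * k) = m ∧ walkPos ε (2 * k) = 0)) / (2 * k)
          < -(lam * eps * m) / (2 * k)) →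
      polyProb true lam h (2 * k) ω (fun ε => mbar ≤ NVis ε (2 * k))
        ≤ c₄ * ((2 * k : ℝ) * Real.sqrt (2 * k)) * Real.exp (-(lam * eps * mbar)) := by
  have hpos : 0 < lam * eps := mul_pos hlam heps
  refine ⟨⟨4, four_pos, fun k hk => posExcursion_prob_ge hk⟩,
    4 / (1 - Real.exp (-(lam * eps)) ^ 2),
    div_pos four_pos (sub_pos.mpr (exp_neg_sq_lt_one hpos)),
    fun h k mbar ω hk hmbar _ hF => polyProb_tail_le hpos lam h ω hk hmbar hF⟩
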